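/- Let C be a Z2Z4-additive ACD code with D_C ⊆ C ∪ C⊥. Then any x ∈ Z2^{α+2β} can be written uniquely as Φ(u) + Φ(v) with u ∈ C and v ∈ C⊥. -/
import Mathlib


open Finset

/-- The ambient mixed alphabet space `Z2^α × Z4^β`. -/
abbrev Amb (α β : ℕ) := (Fin α → ZMod 2) × (Fin β → ZMod 4)

/-- The binary space `Z2^{α+2β}`, represented as `Z2^α × Z2^β × Z2^β`
(binary part, first Gray bits, second Gray bits). -/
abbrev Bin (α β : ℕ) := (Fin α → ZMod 2) × (Fin β → ZMod 2) × (Fin β → ZMod 2)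

/-- The `Z4`-valued inner product `[u,v] = 2·Σ u_i v_i + Σ u'_j v'_j`. -/
def zinner {α β : ℕ} (u v : Amb α β) : ZMod 4 :=
  2 * ∑ i, ((u.1 i).val : ZMod 4) * ((v.1 i).val : ZMod 4) + ∑ j, u.2 j * v.2 j

/-- The dual of a subset of the mixed ambient space. -/
def zdual {α β : ℕ} (C : Set (Amb α β)) : Set (Amb α β) :=
  {v | ∀ u ∈ C, zinner u v = 0}

/-- The vector `2u*v = (0 | 2u'*v')` (componentwise product; doubling kills the binary part). -/
def star2 {α β : ℕ} (u v : Amb α β) : Amb α β :=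
  (0, fun j => 2 * u.2 j * v.2 j)

/-- The usual Gray map `Z4 → Z2²`. -/
def gray (x : ZMod 4) : ZMod 2 × ZMod 2 :=
  match x.val with
  | 0 => (0, 0)
  | 1 => (0, 1)
  | 2 => (1, 1)
  | _ => (1, 0)

/-- The extended Gray map `Φ : Z2^α × Z4^β → Z2^{α+2β}`. -/
def Phi {α β : ℕ} (u : Amb α β) : Bin α β :=
  (u.1, fun j => (gray (u.2 j)).1, fun j => (gray (u.2 j)).2)

/-- The standard binary inner product on `Z2^{α+2β}`. -/
def binner {α β : ℕ} (x y : Bin α β) : ZMod 2 :=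
  ∑ i, x.1 i * y.1 i + ∑ j, x.2.1 j * y.2.1 j + ∑ j, x.2.2 j * y.2.2 j

/-- The dual of a subset of `Z2^{α+2β}`. -/
def bdual {α β : ℕ} (S : Set (Bin α β)) : Set (Bin α β) :=
  {y | ∀ x ∈ S, binner x y = 0}

/-- A subset of `Z2^{α+2β}` is a linear binary code if it is a linear subspace. -/
def IsLinear {α β : ℕ} (S : Set (Bin α β)) : Prop :=
  ∃ M : Submodule (ZMod 2) (Bin α β), ↑M = S

/-- The set `D_C = {2u*v : u ∈ C, v ∈ C⊥}`. -/
def DC {α β : ℕ} (C : Set (Amb α β)) : Set (Amb α β) :=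
  {x | ∃ u ∈ C, ∃ v ∈ zdual C, x = star2 u v}

/-- The standard binary inner product on `Z2^n`. -/
def binner2 {n : ℕ} (u v : Fin n → ZMod 2) : ZMod 2 := ∑ i, u i * v i

/-- The dual of a subset of `Z2^n`. -/
def bdual2 {n : ℕ} (C : Set (Fin n → ZMod 2)) : Set (Fin n → ZMod 2) :=
  {v | ∀ u ∈ C, binner2 u v = 0}

/-! ### Auxiliary lemmas -/

section CardHom

/-- Equiv between homs out of `ZMod n` and n-torsion elements. -/
def homZModEquiv (n : ℕ) (M : Type*) [AddCommGroup M] :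
    (ZMod n →+ M) ≃ {m : M // (n : ℤ) • m = 0} :=
  (ZMod.lift n).symm.trans
    ((zmultiplesHom M).subtypeEquiv (fun m => by simp [zmultiplesHom_apply])).symm

lemma card_homZMod (n : ℕ) (h : n ∣ 4) : Nat.card (ZMod n →+ ZMod 4) = n := by
  rw [Nat.card_congr (homZModEquiv n (ZMod 4))]
  have h1 : n ≤ 4 := Nat.le_of_dvd (by norm_num) h
  interval_cases n
  · omega
  · rw [Nat.card_eq_fintype_card]; decide
  · rw [Nat.card_eq_fintype_card]; decide
  · omega
  · rw [Nat.card_eq_fintype_card]; decide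

/-- Precomposition equiv on additive monoid homs. -/
def homCongrL {A B C : Type*} [AddCommMonoid A] [AddCommMonoid B] [AddCommMonoid C]
    (e : A ≃+ B) : (A →+ C) ≃ (B →+ C) where
  toFun f := f.comp e.symm.toAddMonoidHom
  invFun g := g.comp e.toAddMonoidHom
  left_inv f := by ext a; simp
  right_inv g := by ext b; simp

lemma card_hom (A : Type*) [AddCommGroup A] [Finite A] (h4 : ∀ a : A, (4:ℕ) • a = 0) :
    Nat.card (A →+ ZMod 4) = Nat.card A := by
  classical
  obtain ⟨ι, hι, n, hn, ⟨e⟩⟩ := AddCommGroup.equiv_directSum_zmod_of_finite' A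
  have hne : ∀ i, NeZero (n i) := fun i => ⟨by have := hn i; omega⟩
  have hdvd : ∀ i, n i ∣ 4 := by
    intro i
    set x : DirectSum ι fun i => ZMod (n i) := DirectSum.of (fun i => ZMod (n i)) i 1 with hx
    have h1 : (4:ℕ) • x = 0 := by
      apply e.symm.injective
      rw [map_nsmul, h4, map_zero]
    have h3 : ((4:ℕ) • x) i = (0 : DirectSum ι fun i => ZMod (n i)) i := by rw [h1]
    rw [DFinsupp.smul_apply, hx] at h3
    rw [DirectSum.of_eq_same] at h3
    have h4' : ((4:ℕ) : ZMod (n i)) = 0 := by simpa using h3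
    exact (ZMod.natCast_eq_zero_iff 4 (n i)).mp h4'
  have e2 : (A →+ ZMod 4) ≃ ((DirectSum ι fun i => ZMod (n i)) →+ ZMod 4) := homCongrL e
  have e3 : (Π i, ZMod (n i) →+ ZMod 4) ≃ ((DirectSum ι fun i => ZMod (n i)) →+ ZMod 4) :=
    (DFinsupp.liftAddHom (β := fun i => ZMod (n i)) (γ := ZMod 4)).toEquiv
  rw [Nat.card_congr e2, Nat.card_congr e3.symm, Nat.card_pi, Nat.card_congr e.toEquiv,
    Nat.card_congr (DirectSum.addEquivProd (fun i => ZMod (n i))).toEquiv, Nat.card_pi]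
  exact Finset.prod_congr rfl fun i _ => by rw [card_homZMod (n i) (hdvd i), Nat.card_zmod]

end CardHom

section Gray
variable {α β : ℕ}

/-- Inverse of the Gray map. -/
def ungray (p : ZMod 2 × ZMod 2) : ZMod 4 :=
  if p.1 = 0 then (if p.2 = 0 then 0 else 1) else (if p.2 = 0 then 3 else 2)

lemma ungray_gray : ∀ z : ZMod 4, ungray (gray z) = z := by decide

lemma gray_add_aux : ∀ x y : ZMod 4, gray (x + y + 2 * x * y) = gray x + gray y := by decide

/-- Inverse of the extended Gray map. -/
def PhiInv (x : Bin α β) : Amb α β := (x.1, fun j => ungray (x.2.1 j, x.2.2 j))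

lemma PhiInv_Phi (u : Amb α β) : PhiInv (Phi u) = u := by
  refine Prod.ext rfl ?_
  funext j
  show ungray ((gray (u.2 j)).1, (gray (u.2 j)).2) = u.2 j
  rw [show ((gray (u.2 j)).1, (gray (u.2 j)).2) = gray (u.2 j) from rfl, ungray_gray]

lemma Phi_injective : Function.Injective (Phi (α := α) (β := β)) := fun a b h => by
  rw [← PhiInv_Phi a, h, PhiInv_Phi]

lemma gray_ungray : ∀ p : ZMod 2 × ZMod 2, gray (ungray p) = p := by decide

lemma Phi_PhiInv (x : Bin α β) : Phi (PhiInv x) = x := by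
  refine Prod.ext rfl (Prod.ext ?_ ?_) <;> funext j <;>
    simp only [Phi, PhiInv, gray_ungray]

lemma Phi_add (u v : Amb α β) : Phi (u + v + star2 u v) = Phi u + Phi v := by
  refine Prod.ext ?_ (Prod.ext ?_ ?_)
  · show u.1 + v.1 + (star2 u v).1 = u.1 + v.1
    show u.1 + v.1 + 0 = u.1 + v.1
    rw [add_zero]
  · funext j
    show (gray ((u + v + star2 u v).2 j)).1 = (gray (u.2 j)).1 + (gray (v.2 j)).1
    have : (u + v + star2 u v).2 j = u.2 j + v.2 j + 2 * u.2 j * v.2 j := rfl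
    rw [this, gray_add_aux]; rfl
  · funext j
    show (gray ((u + v + star2 u v).2 j)).2 = (gray (u.2 j)).2 + (gray (v.2 j)).2
    have : (u + v + star2 u v).2 j = u.2 j + v.2 j + 2 * u.2 j * v.2 j := rfl
    rw [this, gray_add_aux]; rfl

end Gray

section Star
variable {α β : ℕ}

lemma star2_aux1 : ∀ x y z : ZMod 4, 2 * (2 * x * y) * z = 0 := by decide
lemma star2_aux2 : ∀ x y z : ZMod 4, 2 * x * (2 * y * z) = 0 := by decide
lemma star2_fix : ∀ a y : ZMod 4, a = 2 * (-a) * y → a = 0 := by decide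
lemma star2_fix' : ∀ a y : ZMod 4, a = 2 * y * (-a) → a = 0 := by decide

lemma star2_add_left (a b v : Amb α β) : star2 (a + b) v = star2 a v + star2 b v := by
  refine Prod.ext (by simp [star2]) ?_
  funext j; show 2 * (a.2 j + b.2 j) * v.2 j = 2 * a.2 j * v.2 j + 2 * b.2 j * v.2 j; ring

lemma star2_sub_left (a b v : Amb α β) : star2 (a - b) v = star2 a v - star2 b v := by
  refine Prod.ext (by simp [star2]) ?_
  funext j; show 2 * (a.2 j - b.2 j) * v.2 j = 2 * a.2 j * v.2 j - 2 * b.2 j * v.2 j; ring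

lemma star2_sub_right (a b v : Amb α β) : star2 v (a - b) = star2 v a - star2 v b := by
  refine Prod.ext (by simp [star2]) ?_
  funext j; show 2 * v.2 j * (a.2 j - b.2 j) = 2 * v.2 j * a.2 j - 2 * v.2 j * b.2 j; ring

lemma star2_star2_left (a b v : Amb α β) : star2 (star2 a b) v = 0 := by
  refine Prod.ext rfl ?_
  funext j; exact star2_aux1 _ _ _

lemma star2_star2_right (a b v : Amb α β) : star2 v (star2 a b) = 0 := by
  refine Prod.ext rfl ?_
  funext j; exact star2_aux2 _ _ _

lemma star2_eq_zero_of_fix (t v : Amb α β) (h : t = star2 (-t) v) : t = 0 := by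
  refine Prod.ext ?_ ?_
  · have : t.1 = (star2 (-t) v).1 := by rw [← h]
    exact this
  · funext j
    have h2 : t.2 j = 2 * (-(t.2 j)) * v.2 j := by
      have := congrFun (congrArg Prod.snd h) j
      simpa [star2] using this
    exact star2_fix _ _ h2

lemma star2_eq_zero_of_fix' (t v : Amb α β) (h : t = star2 v (-t)) : t = 0 := by
  refine Prod.ext ?_ ?_
  · have : t.1 = (star2 v (-t)).1 := by rw [← h]
    exact this
  · funext j
    have h2 : t.2 j = 2 * v.2 j * (-(t.2 j)) := by
      have := congrFun (congrArg Prod.snd h) j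
      simpa [star2] using this
    exact star2_fix' _ _ h2

end Star

section Zinner
variable {α β : ℕ}

def b2 (a : ZMod 2) : ZMod 4 := 2 * (a.val : ZMod 4)

lemma b2_mul_eq :
    ∀ a b : ZMod 2, (2 : ZMod 4) * ((a.val : ZMod 4) * (b.val : ZMod 4)) = b2 (a * b) := by decide
lemma b2_add : ∀ a b : ZMod 2, b2 (a + b) = b2 a + b2 b := by decide
lemma b2_zero : b2 0 = 0 := by decide
lemma b2_neg : ∀ a : ZMod 2, b2 (-a) = - b2 a := by decide

lemma zinner_eq (u v : Amb α β) :
    zinner u v = ∑ i, b2 (u.1 i * v.1 i) + ∑ j, u.2 j * v.2 j := by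
  unfold zinner
  rw [Finset.mul_sum]
  congr 1
  exact Finset.sum_congr rfl fun i _ => b2_mul_eq _ _

lemma zinner_add_left (u v w : Amb α β) : zinner (u + v) w = zinner u w + zinner v w := by
  simp only [zinner_eq, Prod.fst_add, Prod.snd_add, Pi.add_apply, add_mul, b2_add,
    Finset.sum_add_distrib]
  ring

lemma zinner_add_right (u v w : Amb α β) : zinner u (v + w) = zinner u v + zinner u w := by
  simp only [zinner_eq, Prod.fst_add, Prod.snd_add, Pi.add_apply, mul_add, b2_add,
    Finset.sum_add_distrib]
  ring

lemma zinner_zero_left (v : Amb α β) : zinner 0 v = 0 := by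
  simp [zinner_eq, b2_zero]

lemma zinner_neg_right (u v : Amb α β) : zinner u (-v) = - zinner u v := by
  simp only [zinner_eq, Prod.fst_neg, Prod.snd_neg, Pi.neg_apply, mul_neg, b2_neg,
    Finset.sum_neg_distrib]
  ring

lemma zinner_sub_right (u v w : Amb α β) : zinner u (v - w) = zinner u v - zinner u w := by
  rw [sub_eq_add_neg, zinner_add_right, zinner_neg_right, sub_eq_add_neg]

lemma zdual_add_mem {C : Set (Amb α β)} {a b : Amb α β}
    (ha : a ∈ zdual C) (hb : b ∈ zdual C) : a + b ∈ zdual C :=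
  fun u hu => by rw [zinner_add_right, ha u hu, hb u hu, add_zero]

lemma zdual_sub_mem {C : Set (Amb α β)} {a b : Amb α β}
    (ha : a ∈ zdual C) (hb : b ∈ zdual C) : a - b ∈ zdual C :=
  fun u hu => by rw [zinner_sub_right, ha u hu, hb u hu, sub_self]

end Zinner

section Decomp
variable {α β : ℕ}

lemma zmod2_four : ∀ a : ZMod 2, (4:ℕ) • a = 0 := by decide
lemma zmod4_four : ∀ a : ZMod 4, (4:ℕ) • a = 0 := by decide

lemma four_smul_amb (x : Amb α β) : (4:ℕ) • x = 0 := by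
  refine Prod.ext (funext fun i => ?_) (funext fun j => ?_)
  · show (4:ℕ) • x.1 i = 0
    exact zmod2_four _
  · show (4:ℕ) • x.2 j = 0
    exact zmod4_four _

lemma exists_decomp (C : AddSubgroup (Amb α β))
    (hACD : ∀ x ∈ C, x ∈ zdual (C : Set (Amb α β)) → x = 0) (w : Amb α β) :
    ∃ c ∈ C, w - c ∈ zdual (C : Set (Amb α β)) := by
  classical
  have hfin : Finite (↥C →+ ZMod 4) := Finite.of_injective _ DFunLike.coe_injective
  let ρ : C → (C →+ ZMod 4) := fun c =>
    { toFun := fun u => zinner u.1 c.1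
      map_zero' := zinner_zero_left _
      map_add' := fun a b => zinner_add_left _ _ _ }
  have hρ : ∀ c u, ρ c u = zinner u.1 c.1 := fun _ _ => rfl
  have hinj : Function.Injective ρ := by
    intro c c' h
    have hz : ∀ u ∈ C, zinner u ((c : Amb α β) - c') = 0 := by
      intro u hu
      have h1 : ρ c ⟨u, hu⟩ = ρ c' ⟨u, hu⟩ := by rw [h]
      rw [hρ, hρ] at h1
      rw [zinner_sub_right]
      rw [show zinner u (c : Amb α β) = zinner u (c' : Amb α β) from h1, sub_self]
    have hmem : ((c : Amb α β) - c') ∈ C := sub_mem c.2 c'.2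
    have h0 := hACD _ hmem hz
    exact Subtype.ext (by rwa [sub_eq_zero] at h0)
  have hcard : Nat.card C = Nat.card (C →+ ZMod 4) :=
    (card_hom C (fun a => Subtype.ext (by simpa using four_smul_amb (a : Amb α β)))).symm
  have hbij : Function.Bijective ρ := (Nat.bijective_iff_injective_and_card ρ).mpr ⟨hinj, hcard⟩
  obtain ⟨c, hc⟩ := hbij.2
    { toFun := fun u => zinner u.1 w
      map_zero' := zinner_zero_left _
      map_add' := fun a b => zinner_add_left _ _ _ }
  refine ⟨c.1, c.2, fun u hu => ?_⟩
  have h1 : ρ c ⟨u, hu⟩ = zinner u w := by rw [hc]; rfl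
  rw [hρ] at h1
  rw [zinner_sub_right, ← h1, sub_self]

end Decomp

section Unique
variable {α β : ℕ}

lemma mixed_case (C : AddSubgroup (Amb α β))
    (hACD : ∀ x ∈ C, x ∈ zdual (C : Set (Amb α β)) → x = 0)
    {u1 v1 u2 v2 : Amb α β} (hu1 : u1 ∈ C) (hv1 : v1 ∈ zdual (C : Set (Amb α β)))
    (hu2 : u2 ∈ C) (hv2 : v2 ∈ zdual (C : Set (Amb α β)))
    (heq : u1 + v1 + star2 u1 v1 = u2 + v2 + star2 u2 v2)
    (hs1 : star2 u1 v1 ∈ C) (hs2 : star2 u2 v2 ∈ zdual (C : Set (Amb α β))) :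
    u1 = u2 ∧ v1 = v2 := by
  have he : (u1 + star2 u1 v1) - u2 = (v2 + star2 u2 v2) - v1 := by linear_combination heq
  have hmemC : (u1 + star2 u1 v1) - u2 ∈ C := sub_mem (add_mem hu1 hs1) hu2
  have hmemD : (u1 + star2 u1 v1) - u2 ∈ zdual (C : Set (Amb α β)) :=
    he ▸ zdual_sub_mem (zdual_add_mem hv2 hs2) hv1
  have he0 : (u1 + star2 u1 v1) - u2 = 0 := hACD _ hmemC hmemD
  have hu2eq : u2 = u1 + star2 u1 v1 := by
    rw [sub_eq_zero] at he0; exact he0.symm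
  have he0' : (v2 + star2 u2 v2) - v1 = 0 := by rw [← he]; exact he0
  have hv2eq : v2 = v1 - star2 u2 v2 := by linear_combination he0'
  have hs2eq : star2 u2 v2 = star2 u1 v1 := by
    conv_lhs => rw [hu2eq, hv2eq]
    rw [star2_add_left, star2_sub_right, star2_sub_right, star2_star2_right,
      star2_star2_left, star2_star2_left]
    simp
  have hz : star2 u1 v1 = 0 := hACD _ hs1 (hs2eq ▸ hs2)
  have hz2 : star2 u2 v2 = 0 := hs2eq.trans hz
  constructor
  · rw [hu2eq, hz, add_zero]
  · rw [hv2eq, hz2, sub_zero]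

lemma unique_key (C : AddSubgroup (Amb α β))
    (hACD : ∀ x ∈ C, x ∈ zdual (C : Set (Amb α β)) → x = 0)
    (hD : DC (C : Set (Amb α β)) ⊆ (C : Set (Amb α β)) ∪ zdual (C : Set (Amb α β)))
    {u1 v1 u2 v2 : Amb α β} (hu1 : u1 ∈ C) (hv1 : v1 ∈ zdual (C : Set (Amb α β)))
    (hu2 : u2 ∈ C) (hv2 : v2 ∈ zdual (C : Set (Amb α β)))
    (heq : u1 + v1 + star2 u1 v1 = u2 + v2 + star2 u2 v2) :
    u1 = u2 ∧ v1 = v2 := by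
  have hs1 := hD ⟨u1, hu1, v1, hv1, rfl⟩
  have hs2 := hD ⟨u2, hu2, v2, hv2, rfl⟩
  rcases hs1 with h1 | h1 <;> rcases hs2 with h2 | h2
  · -- both in C
    have he : v1 - v2 = (u2 + star2 u2 v2) - (u1 + star2 u1 v1) := by linear_combination heq
    have hmemC : v1 - v2 ∈ C := he ▸ sub_mem (add_mem hu2 h2) (add_mem hu1 h1)
    have hv : v1 - v2 = 0 := hACD _ hmemC (zdual_sub_mem hv1 hv2)
    have hveq : v1 = v2 := by rwa [sub_eq_zero] at hv
    have h3 : u1 - u2 = star2 u2 v2 - star2 u1 v1 := by linear_combination heq - hv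
    rw [← hveq] at h3
    rw [← star2_sub_left] at h3
    have h4 : u1 - u2 = star2 (-(u1 - u2)) v1 := by rw [neg_sub]; exact h3
    have h5 := star2_eq_zero_of_fix _ _ h4
    exact ⟨by rwa [sub_eq_zero] at h5, hveq⟩
  · exact mixed_case C hACD hu1 hv1 hu2 hv2 heq h1 h2
  · have h := mixed_case C hACD hu2 hv2 hu1 hv1 heq.symm h2 h1
    exact ⟨h.1.symm, h.2.symm⟩
  · -- both in the dual
    have he : u1 - u2 = (v2 + star2 u2 v2) - (v1 + star2 u1 v1) := by linear_combination heq
    have hmemD : u1 - u2 ∈ zdual (C : Set (Amb α β)) :=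
      he ▸ zdual_sub_mem (zdual_add_mem hv2 h2) (zdual_add_mem hv1 h1)
    have hu : u1 - u2 = 0 := hACD _ (sub_mem hu1 hu2) hmemD
    have hueq : u1 = u2 := by rwa [sub_eq_zero] at hu
    have h3 : v1 - v2 = star2 u2 v2 - star2 u1 v1 := by linear_combination heq - hu
    rw [← hueq] at h3
    rw [← star2_sub_right] at h3
    have h4 : v1 - v2 = star2 u1 (-(v1 - v2)) := by rw [neg_sub]; exact h3
    have h5 := star2_eq_zero_of_fix' _ _ h4
    exact ⟨hueq, by rwa [sub_eq_zero] at h5⟩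

end Unique

/-- If `C` is ACD and `D_C ⊆ C ∪ C⊥`, every `x ∈ Z2^{α+2β}` is uniquely
`Φ(u) + Φ(v)` with `u ∈ C`, `v ∈ C⊥`. -/
theorem stmt11 {α β : ℕ} (C : AddSubgroup (Amb α β))
    (hACD : ∀ x ∈ C, x ∈ zdual (C : Set (Amb α β)) → x = 0)
    (hD : DC (C : Set (Amb α β)) ⊆ (C : Set (Amb α β)) ∪ zdual (C : Set (Amb α β))) :
    ∀ x : Bin α β, ∃! p : Amb α β × Amb α β,
      p.1 ∈ C ∧ p.2 ∈ zdual (C : Set (Amb α β)) ∧ x = Phi p.1 + Phi p.2 := by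
  intro x
  obtain ⟨c, hc, hd⟩ := exists_decomp C hACD (PhiInv x)
  have hx : ∀ p : Amb α β × Amb α β,
      (x = Phi p.1 + Phi p.2) ↔ (PhiInv x = p.1 + p.2 + star2 p.1 p.2) := by
    intro p
    rw [← Phi_add]
    constructor
    · intro h
      apply Phi_injective
      rw [Phi_PhiInv, h]
    · intro h
      rw [← h]
      exact (Phi_PhiInv x).symm
  have hsd : star2 c (PhiInv x - c) ∈ DC (C : Set (Amb α β)) := ⟨c, hc, _, hd, rfl⟩
  have main : ∃ p : Amb α β × Amb α β, p.1 ∈ C ∧ p.2 ∈ zdual (C : Set (Amb α β)) ∧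
      PhiInv x = p.1 + p.2 + star2 p.1 p.2 := by
    rcases hD hsd with hsC | hsD
    · refine ⟨(c - star2 c (PhiInv x - c), PhiInv x - c), sub_mem hc hsC, hd, ?_⟩
      have h1 : star2 (c - star2 c (PhiInv x - c)) (PhiInv x - c) = star2 c (PhiInv x - c) := by
        rw [star2_sub_left, star2_star2_left, sub_zero]
      show PhiInv x = (c - star2 c (PhiInv x - c)) + (PhiInv x - c) +
        star2 (c - star2 c (PhiInv x - c)) (PhiInv x - c)
      rw [h1]; abel
    · refine ⟨(c, PhiInv x - c - star2 c (PhiInv x - c)), hc, zdual_sub_mem hd hsD, ?_⟩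
      have h1 : star2 c (PhiInv x - c - star2 c (PhiInv x - c)) = star2 c (PhiInv x - c) := by
        rw [star2_sub_right, star2_star2_right, sub_zero]
      show PhiInv x = c + (PhiInv x - c - star2 c (PhiInv x - c)) +
        star2 c (PhiInv x - c - star2 c (PhiInv x - c))
      rw [h1]; abel
  obtain ⟨p, hp1, hp2, hsum⟩ := main
  refine ⟨p, ⟨hp1, hp2, (hx p).mpr hsum⟩, ?_⟩
  rintro ⟨q1, q2⟩ ⟨hq1, hq2, hqx⟩
  have hqsum := (hx (q1, q2)).mp hqx
  obtain ⟨h1, h2⟩ := unique_key C hACD hD hq1 hq2 hp1 hp2 (by rw [← hqsum, ← hsum])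
  exact Prod.ext h1 h2
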